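/- (Remark 3.) Let a, p1, p2, q1, q2 ∈ ℝ and let A = [[a1,a2],[a3,a4]] be a 2×2 real matrix such that the 3×3 block matrix M = [[a, (p1,p2)],[ (q1,q2)ᵀ, A]] is invertible. Let w, z : ℝ² → ℝ be smooth functions of (x,t) with p1·w_x + p2·z_x + a vanishing nowhere, satisfying the nonlinear potential system w_t = w_xx/(p1·w_x + p2·z_x + a)², z_t = z_xx/(p1·w_x + p2·z_x + a)². Suppose the map Φ : ℝ² → ℝ², Φ(x,t) = (a·x + p1·w(x,t) + p2·z(x,t), t), is a bijection with smooth inverse, and define w', z' : ℝ² → ℝ by w'(Φ(x,t)) = q1·x + a1·w(x,t) + a2·z(x,t) and z'(Φ(x,t)) = q2·x + a3·w(x,t) + a4·z(x,t). Then w' and z' satisfy the two separate linear heat equations w'_{t'} = w'_{x'x'} and z'_{t'} = z'_{x'x'}. -/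

import Mathlib

open Matrix

/-- Partial derivative with respect to the first variable `x`. -/
noncomputable def pdx (f : ℝ × ℝ → ℝ) : ℝ × ℝ → ℝ :=
  fun p => deriv (fun x => f (x, p.2)) p.1

/-- Partial derivative with respect to the second variable `t`. -/
noncomputable def pdt (f : ℝ × ℝ → ℝ) : ℝ × ℝ → ℝ :=
  fun p => deriv (fun t => f (p.1, t)) p.2

/-- Second partial derivative with respect to the first variable. -/
noncomputable def pdxx (f : ℝ × ℝ → ℝ) : ℝ × ℝ → ℝ := pdx (pdx f)

private lemma slice_x {f : ℝ × ℝ → ℝ} (hf : ContDiff ℝ (⊤ : ℕ∞) f) (p : ℝ × ℝ) :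
    HasDerivAt (fun x => f (x, p.2)) (pdx f p) p.1 := by
  have h : DifferentiableAt ℝ (fun x => f (x, p.2)) p.1 :=
    ((hf.differentiable (by simp)).comp
      (differentiable_id.prodMk (differentiable_const p.2))).differentiableAt
  exact h.hasDerivAt

private lemma slice_t {f : ℝ × ℝ → ℝ} (hf : ContDiff ℝ (⊤ : ℕ∞) f) (p : ℝ × ℝ) :
    HasDerivAt (fun t => f (p.1, t)) (pdt f p) p.2 := by
  have h : DifferentiableAt ℝ (fun t => f (p.1, t)) p.2 :=
    ((hf.differentiable (by simp)).comp
      ((differentiable_const p.1).prodMk differentiable_id)).differentiableAt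
  exact h.hasDerivAt

private lemma pdx_fd {f : ℝ × ℝ → ℝ} (hf : ContDiff ℝ (⊤ : ℕ∞) f) (p : ℝ × ℝ) :
    pdx f p = fderiv ℝ f p (1, 0) := by
  have hin : HasDerivAt (fun x : ℝ => (x, p.2)) ((1 : ℝ), (0 : ℝ)) p.1 :=
    (hasDerivAt_id p.1).prodMk (hasDerivAt_const p.1 p.2)
  have := ((hf.differentiable (by simp)) p).hasFDerivAt.comp_hasDerivAt p.1 hin
  exact (slice_x hf p).unique this

private lemma pdt_fd {f : ℝ × ℝ → ℝ} (hf : ContDiff ℝ (⊤ : ℕ∞) f) (p : ℝ × ℝ) :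
    pdt f p = fderiv ℝ f p (0, 1) := by
  have hin : HasDerivAt (fun t : ℝ => (p.1, t)) ((0 : ℝ), (1 : ℝ)) p.2 :=
    (hasDerivAt_const p.2 p.1).prodMk (hasDerivAt_id p.2)
  have := ((hf.differentiable (by simp)) p).hasFDerivAt.comp_hasDerivAt p.2 hin
  exact (slice_t hf p).unique this

private lemma contDiff_pdx {f : ℝ × ℝ → ℝ} (hf : ContDiff ℝ (⊤ : ℕ∞) f) : ContDiff ℝ (⊤ : ℕ∞) (pdx f) := by
  have h1 : ContDiff ℝ (⊤ : ℕ∞) (fun p : ℝ × ℝ => fderiv ℝ f p (1, 0)) :=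
    (hf.fderiv_right (by simp)).clm_apply contDiff_const
  have h2 : pdx f = fun p : ℝ × ℝ => fderiv ℝ f p (1, 0) := funext fun p => pdx_fd hf p
  rwa [h2]

private lemma key_heat (a p1 p2 c0 c1 c2 : ℝ)
    (w z : ℝ × ℝ → ℝ) (hw : ContDiff ℝ (⊤ : ℕ∞) w) (hz : ContDiff ℝ (⊤ : ℕ∞) z)
    (hden : ∀ p : ℝ × ℝ, p1 * pdx w p + p2 * pdx z p + a ≠ 0)
    (heq1 : ∀ p : ℝ × ℝ, pdt w p = pdxx w p / (p1 * pdx w p + p2 * pdx z p + a) ^ 2)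
    (heq2 : ∀ p : ℝ × ℝ, pdt z p = pdxx z p / (p1 * pdx w p + p2 * pdx z p + a) ^ 2)
    (u : ℝ × ℝ → ℝ) (hu : ContDiff ℝ (⊤ : ℕ∞) u)
    (huΦ : ∀ p : ℝ × ℝ,
      u (a * p.1 + p1 * w p + p2 * z p, p.2) = c0 * p.1 + c1 * w p + c2 * z p)
    (hsurj : ∀ p : ℝ × ℝ, ∃ q : ℝ × ℝ, ((a * q.1 + p1 * w q + p2 * z q, q.2) : ℝ × ℝ) = p) :
    ∀ p : ℝ × ℝ, pdt u p = pdxx u p := by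
  -- first x-derivative identity
  have hfx : ∀ q : ℝ × ℝ,
      (a + p1 * pdx w q + p2 * pdx z q) * pdx u (a * q.1 + p1 * w q + p2 * z q, q.2)
        = c0 + c1 * pdx w q + c2 * pdx z q := by
    intro q
    have Hwx := slice_x hw q
    have Hzx := slice_x hz q
    have h1 : HasDerivAt (fun x : ℝ => a * x) a q.1 := by
      simpa using (hasDerivAt_id q.1).const_mul a
    have HX : HasDerivAt (fun x => a * x + p1 * w (x, q.2) + p2 * z (x, q.2))
        (a + p1 * pdx w q + p2 * pdx z q) q.1 :=
      (h1.add (Hwx.const_mul p1)).add (Hzx.const_mul p2)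
    have Hin : HasDerivAt
        (fun x => ((a * x + p1 * w (x, q.2) + p2 * z (x, q.2), q.2) : ℝ × ℝ))
        ((a + p1 * pdx w q + p2 * pdx z q, 0) : ℝ × ℝ) q.1 :=
      HX.prodMk (hasDerivAt_const q.1 q.2)
    have HA : HasFDerivAt u (fderiv ℝ u (a * q.1 + p1 * w q + p2 * z q, q.2))
        (a * q.1 + p1 * w q + p2 * z q, q.2) := ((hu.differentiable (by simp)) _).hasFDerivAt
    have Hcomp := HA.comp_hasDerivAt q.1 Hin
    have h2 : HasDerivAt (fun x : ℝ => c0 * x) c0 q.1 := by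
      simpa using (hasDerivAt_id q.1).const_mul c0
    have HV : HasDerivAt (fun x => c0 * x + c1 * w (x, q.2) + c2 * z (x, q.2))
        (c0 + c1 * pdx w q + c2 * pdx z q) q.1 :=
      (h2.add (Hwx.const_mul c1)).add (Hzx.const_mul c2)
    have Hcomp' : HasDerivAt (fun x => c0 * x + c1 * w (x, q.2) + c2 * z (x, q.2))
        (fderiv ℝ u (a * q.1 + p1 * w q + p2 * z q, q.2)
          ((a + p1 * pdx w q + p2 * pdx z q, 0) : ℝ × ℝ)) q.1 := by
      have hfun : (u ∘ fun x => ((a * x + p1 * w (x, q.2) + p2 * z (x, q.2), q.2) : ℝ × ℝ))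
          = fun x => c0 * x + c1 * w (x, q.2) + c2 * z (x, q.2) := by
        funext x; exact huΦ (x, q.2)
      rw [← hfun]; exact Hcomp
    have hkey := Hcomp'.unique HV
    have hsm : ((a + p1 * pdx w q + p2 * pdx z q, (0 : ℝ)) : ℝ × ℝ)
        = (a + p1 * pdx w q + p2 * pdx z q) • ((1 : ℝ), (0 : ℝ)) := by simp
    rw [hsm, ContinuousLinearMap.map_smul, smul_eq_mul,
      ← pdx_fd hu (a * q.1 + p1 * w q + p2 * z q, q.2)] at hkey
    exact hkey
  -- t-derivative identity
  have hft : ∀ q : ℝ × ℝ,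
      (p1 * pdt w q + p2 * pdt z q) * pdx u (a * q.1 + p1 * w q + p2 * z q, q.2)
        + pdt u (a * q.1 + p1 * w q + p2 * z q, q.2)
        = c1 * pdt w q + c2 * pdt z q := by
    intro q
    have Hwt := slice_t hw q
    have Hzt := slice_t hz q
    have HXt : HasDerivAt (fun s => a * q.1 + p1 * w (q.1, s) + p2 * z (q.1, s))
        (0 + p1 * pdt w q + p2 * pdt z q) q.2 :=
      ((hasDerivAt_const q.2 (a * q.1)).add (Hwt.const_mul p1)).add (Hzt.const_mul p2)
    have Hin : HasDerivAt
        (fun s => ((a * q.1 + p1 * w (q.1, s) + p2 * z (q.1, s), s) : ℝ × ℝ))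
        ((0 + p1 * pdt w q + p2 * pdt z q, 1) : ℝ × ℝ) q.2 :=
      HXt.prodMk (hasDerivAt_id q.2)
    have HA : HasFDerivAt u (fderiv ℝ u (a * q.1 + p1 * w q + p2 * z q, q.2))
        (a * q.1 + p1 * w q + p2 * z q, q.2) := ((hu.differentiable (by simp)) _).hasFDerivAt
    have Hcomp : HasDerivAt
        (u ∘ fun s => ((a * q.1 + p1 * w (q.1, s) + p2 * z (q.1, s), s) : ℝ × ℝ))
        (fderiv ℝ u (a * q.1 + p1 * w q + p2 * z q, q.2)
          ((0 + p1 * pdt w q + p2 * pdt z q, 1) : ℝ × ℝ)) q.2 :=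
      HA.comp_hasDerivAt_of_eq q.2 Hin rfl
    have HV : HasDerivAt (fun s => c0 * q.1 + c1 * w (q.1, s) + c2 * z (q.1, s))
        (0 + c1 * pdt w q + c2 * pdt z q) q.2 :=
      ((hasDerivAt_const q.2 (c0 * q.1)).add (Hwt.const_mul c1)).add (Hzt.const_mul c2)
    have Hcomp' : HasDerivAt (fun s => c0 * q.1 + c1 * w (q.1, s) + c2 * z (q.1, s))
        (fderiv ℝ u (a * q.1 + p1 * w q + p2 * z q, q.2)
          ((0 + p1 * pdt w q + p2 * pdt z q, 1) : ℝ × ℝ)) q.2 := by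
      have hfun : (u ∘ fun s => ((a * q.1 + p1 * w (q.1, s) + p2 * z (q.1, s), s) : ℝ × ℝ))
          = fun s => c0 * q.1 + c1 * w (q.1, s) + c2 * z (q.1, s) := by
        funext s; exact huΦ (q.1, s)
      rw [← hfun]; exact Hcomp
    have hkey := Hcomp'.unique HV
    have hvec : ((0 + p1 * pdt w q + p2 * pdt z q, (1 : ℝ)) : ℝ × ℝ)
        = (p1 * pdt w q + p2 * pdt z q) • ((1 : ℝ), (0 : ℝ)) + ((0 : ℝ), (1 : ℝ)) := by
      simp
    rw [hvec, ContinuousLinearMap.map_add, ContinuousLinearMap.map_smul, smul_eq_mul,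
      ← pdx_fd hu (a * q.1 + p1 * w q + p2 * z q, q.2),
      ← pdt_fd hu (a * q.1 + p1 * w q + p2 * z q, q.2)] at hkey
    linarith [hkey]
  -- first derivative as quotient, valid everywhere
  have hUx : ∀ r : ℝ × ℝ, pdx u (a * r.1 + p1 * w r + p2 * z r, r.2)
      = (c0 + c1 * pdx w r + c2 * pdx z r) / (p1 * pdx w r + p2 * pdx z r + a) := by
    intro r
    rw [eq_div_iff (hden r)]
    linear_combination hfx r
  intro p
  obtain ⟨q, rfl⟩ := hsurj p
  -- second derivative identity at q
  have hwx1 := contDiff_pdx hw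
  have hzx1 := contDiff_pdx hz
  have hux1 := contDiff_pdx hu
  have Hwx := slice_x hw q
  have Hzx := slice_x hz q
  have h1 : HasDerivAt (fun x : ℝ => a * x) a q.1 := by
    simpa using (hasDerivAt_id q.1).const_mul a
  have HX : HasDerivAt (fun x => a * x + p1 * w (x, q.2) + p2 * z (x, q.2))
      (a + p1 * pdx w q + p2 * pdx z q) q.1 :=
    (h1.add (Hwx.const_mul p1)).add (Hzx.const_mul p2)
  have Hin : HasDerivAt
      (fun x => ((a * x + p1 * w (x, q.2) + p2 * z (x, q.2), q.2) : ℝ × ℝ))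
      ((a + p1 * pdx w q + p2 * pdx z q, 0) : ℝ × ℝ) q.1 :=
    HX.prodMk (hasDerivAt_const q.1 q.2)
  have HB : HasFDerivAt (pdx u) (fderiv ℝ (pdx u) (a * q.1 + p1 * w q + p2 * z q, q.2))
      (a * q.1 + p1 * w q + p2 * z q, q.2) := ((hux1.differentiable (by simp)) _).hasFDerivAt
  have Hcomp := HB.comp_hasDerivAt q.1 Hin
  -- derivative of the quotient
  have Hnum : HasDerivAt (fun x => c0 + c1 * pdx w (x, q.2) + c2 * pdx z (x, q.2))
      (0 + c1 * pdxx w q + c2 * pdxx z q) q.1 :=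
    ((hasDerivAt_const q.1 c0).add ((slice_x hwx1 q).const_mul c1)).add
      ((slice_x hzx1 q).const_mul c2)
  have Hden : HasDerivAt (fun x => p1 * pdx w (x, q.2) + p2 * pdx z (x, q.2) + a)
      (p1 * pdxx w q + p2 * pdxx z q + 0) q.1 :=
    (((slice_x hwx1 q).const_mul p1).add ((slice_x hzx1 q).const_mul p2)).add
      (hasDerivAt_const q.1 a)
  have HQ := Hnum.div Hden (hden q)
  have Hcomp' : HasDerivAt
      (fun x => (c0 + c1 * pdx w (x, q.2) + c2 * pdx z (x, q.2))
        / (p1 * pdx w (x, q.2) + p2 * pdx z (x, q.2) + a))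
      (fderiv ℝ (pdx u) (a * q.1 + p1 * w q + p2 * z q, q.2)
        ((a + p1 * pdx w q + p2 * pdx z q, 0) : ℝ × ℝ)) q.1 := by
    have hfun : ((pdx u) ∘ fun x => ((a * x + p1 * w (x, q.2) + p2 * z (x, q.2), q.2) : ℝ × ℝ))
        = fun x => (c0 + c1 * pdx w (x, q.2) + c2 * pdx z (x, q.2))
          / (p1 * pdx w (x, q.2) + p2 * pdx z (x, q.2) + a) := by
      funext x; exact hUx (x, q.2)
    rw [← hfun]; exact Hcomp
  have hkey2 : fderiv ℝ (pdx u) (a * q.1 + p1 * w q + p2 * z q, q.2)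
      ((a + p1 * pdx w q + p2 * pdx z q, 0) : ℝ × ℝ)
      = ((0 + c1 * pdxx w q + c2 * pdxx z q) * (p1 * pdx w q + p2 * pdx z q + a)
          - (c0 + c1 * pdx w q + c2 * pdx z q) * (p1 * pdxx w q + p2 * pdxx z q + 0))
        / (p1 * pdx w q + p2 * pdx z q + a) ^ 2 :=
    Hcomp'.unique HQ
  have hsm : ((a + p1 * pdx w q + p2 * pdx z q, (0 : ℝ)) : ℝ × ℝ)
      = (a + p1 * pdx w q + p2 * pdx z q) • ((1 : ℝ), (0 : ℝ)) := by simp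
  rw [hsm, ContinuousLinearMap.map_smul, smul_eq_mul,
    ← pdx_fd hux1 (a * q.1 + p1 * w q + p2 * z q, q.2)] at hkey2
  -- now combine everything
  have e1 := hfx q
  have e2 := hft q
  have e3 := heq1 q
  have e4 := heq2 q
  have hD := hden q
  set P := pdx u (a * q.1 + p1 * w q + p2 * z q, q.2) with hP
  set Q : ℝ := pdx (pdx u) (a * q.1 + p1 * w q + p2 * z q, q.2) with hQdef
  have hQeq : pdxx u (a * q.1 + p1 * w q + p2 * z q, q.2) = Q := rfl
  rw [hQeq]
  rw [e3, e4] at e2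
  have hD2 : (p1 * pdx w q + p2 * pdx z q + a) ^ 2 ≠ 0 := pow_ne_zero 2 hD
  field_simp at e2 hkey2
  have h5 : pdt u (a * q.1 + p1 * w q + p2 * z q, q.2)
        * (p1 * pdx w q + p2 * pdx z q + a) ^ 3
      = Q * (p1 * pdx w q + p2 * pdx z q + a) ^ 3 := by
    linear_combination (p1 * pdx w q + p2 * pdx z q + a) * e2 - hkey2
      - (p1 * pdxx w q + p2 * pdxx z q) * e1
  exact mul_right_cancel₀ (pow_ne_zero 3 hD) h5

/-- Remark 3: if `(w,z)` solves the nonlinear potential system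
`w_t = w_xx/(p1·w_x + p2·z_x + a)²`, `z_t = z_xx/(p1·w_x + p2·z_x + a)²`, then the
transformed variables `w' = q1·x + a1·w + a2·z`, `z' = q2·x + a3·w + a4·z` of
`x' = a·x + p1·w + p2·z`, `t' = t` solve the two separate linear heat equations
`w'_{t'} = w'_{x'x'}`, `z'_{t'} = z'_{x'x'}`. -/
theorem remark3_two_separate_heat_equations
    (a p1 p2 q1 q2 a1 a2 a3 a4 : ℝ)
    (M : Matrix (Fin 3) (Fin 3) ℝ)
    (hM : M = !![a, p1, p2; q1, a1, a2; q2, a3, a4])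
    (hMinv : IsUnit M.det)
    (w z : ℝ × ℝ → ℝ) (hw : ContDiff ℝ (⊤ : ℕ∞) w) (hz : ContDiff ℝ (⊤ : ℕ∞) z)
    (hden : ∀ p : ℝ × ℝ, p1 * pdx w p + p2 * pdx z p + a ≠ 0)
    (heq1 : ∀ p : ℝ × ℝ, pdt w p = pdxx w p / (p1 * pdx w p + p2 * pdx z p + a) ^ 2)
    (heq2 : ∀ p : ℝ × ℝ, pdt z p = pdxx z p / (p1 * pdx w p + p2 * pdx z p + a) ^ 2)
    (Φ : ℝ × ℝ → ℝ × ℝ)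
    (hΦ : Φ = fun p => (a * p.1 + p1 * w p + p2 * z p, p.2))
    (Φinv : ℝ × ℝ → ℝ × ℝ)
    (hl : Function.LeftInverse Φinv Φ) (hr : Function.RightInverse Φinv Φ)
    (hΦinv : ContDiff ℝ (⊤ : ℕ∞) Φinv)
    (w' z' : ℝ × ℝ → ℝ)
    (hw' : ∀ p : ℝ × ℝ, w' (Φ p) = q1 * p.1 + a1 * w p + a2 * z p)
    (hz' : ∀ p : ℝ × ℝ, z' (Φ p) = q2 * p.1 + a3 * w p + a4 * z p) :
    (∀ p : ℝ × ℝ, pdt w' p = pdxx w' p) ∧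
    (∀ p : ℝ × ℝ, pdt z' p = pdxx z' p) := by
  have hsurj : ∀ p : ℝ × ℝ, ∃ q : ℝ × ℝ,
      ((a * q.1 + p1 * w q + p2 * z q, q.2) : ℝ × ℝ) = p := by
    intro p
    refine ⟨Φinv p, ?_⟩
    have := hr p
    rw [hΦ] at this
    exact this
  have hws : ContDiff ℝ (⊤ : ℕ∞) w' := by
    have hw'eq : w' = fun p => q1 * (Φinv p).1 + a1 * w (Φinv p) + a2 * z (Φinv p) := by
      funext p
      have h := hw' (Φinv p)
      rwa [hr p] at h
    rw [hw'eq]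
    exact ((contDiff_const.mul (contDiff_fst.comp hΦinv)).add
      (contDiff_const.mul (hw.comp hΦinv))).add (contDiff_const.mul (hz.comp hΦinv))
  have hzs : ContDiff ℝ (⊤ : ℕ∞) z' := by
    have hz'eq : z' = fun p => q2 * (Φinv p).1 + a3 * w (Φinv p) + a4 * z (Φinv p) := by
      funext p
      have h := hz' (Φinv p)
      rwa [hr p] at h
    rw [hz'eq]
    exact ((contDiff_const.mul (contDiff_fst.comp hΦinv)).add
      (contDiff_const.mul (hw.comp hΦinv))).add (contDiff_const.mul (hz.comp hΦinv))
  have hwΦ : ∀ p : ℝ × ℝ,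
      w' (a * p.1 + p1 * w p + p2 * z p, p.2) = q1 * p.1 + a1 * w p + a2 * z p := by
    intro p
    have h := hw' p
    rwa [hΦ] at h
  have hzΦ : ∀ p : ℝ × ℝ,
      z' (a * p.1 + p1 * w p + p2 * z p, p.2) = q2 * p.1 + a3 * w p + a4 * z p := by
    intro p
    have h := hz' p
    rwa [hΦ] at h
  exact ⟨key_heat a p1 p2 q1 a1 a2 w z hw hz hden heq1 heq2 w' hws hwΦ hsurj,
    key_heat a p1 p2 q2 a3 a4 w z hw hz hden heq1 heq2 z' hzs hzΦ hsurj⟩
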